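/- arXiv:2011.04144 — 7 statements merged into one kernel-verified Lean document; each statement's English description precedes it below -/
import Mathlib

section
/- Define f(a,b) := (a+b)·log(1+a/b) − a (natural logarithm) for b > 0 and a ≥ −b. Then for every b > 0 and every a ≥ −b, one has (1/3)·min(a²/b, |a|·log(2+|a|/b)) ≤ f(a,b) ≤ min(a²/b, |a|·log(2+|a|/b)). -/
/-- `f(a,b) := (a+b)·log(1+a/b) − a` (natural logarithm). -/
noncomputable def f (a b : ℝ) : ℝ := (a + b) * Real.log (1 + a / b) - a

/-!
Since `f a b = b * h (a / b)` with Bennett's function `h t = (1 + t) log (1 + t) - t`, and both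
sides of the bounds scale the same way, it suffices to compare `h t` with `t ^ 2` and
`|t| log (2 + |t|)` for `t ≥ -1`. The upper bounds follow from `log x ≤ x - 1`. For the lower
bound: on `[-1, 0]`, `h t ≥ t ^ 2 / 2`; for moderate `t ≥ 0`, Bennett's inequality
`h t ≥ 3 t ^ 2 / (6 + 2 t)` gives `h t ≥ t ^ 2 / 3`; for `t ^ 2 ≥ 2`, the Padé bound
`log (1 + t) ≥ 2 t / (2 + t)` gives `3 h t ≥ t log (2 + t)`.
-/

open Real Set

noncomputable def bennettFun (t : ℝ) : ℝ := (1 + t) * log (1 + t) - t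

lemma f_eq_mul_bennettFun (a : ℝ) {b : ℝ} (hb : b ≠ 0) : f a b = b * bennettFun (a / b) := by
  have hab : a + b = b * (1 + a / b) := by field_simp; ring
  rw [f, bennettFun, hab]
  field_simp

/-- The first term of the series `log (1 + a⁻¹) = 2 ∑ (2a + 1)^{-(2k+1)} / (2k + 1)`, `a = t⁻¹`. -/
lemma two_mul_div_two_add_le_log_one_add {t : ℝ} (ht : 0 ≤ t) :
    2 * t / (2 + t) ≤ log (1 + t) := by
  obtain rfl | ht := ht.eq_or_lt
  · simp
  have hsum := hasSum_log_one_add_inv (inv_pos.2 ht)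
  rw [inv_inv] at hsum
  calc 2 * t / (2 + t) = 2 * (1 / (2 * (0 : ℕ) + 1)) * (1 / (2 * t⁻¹ + 1)) ^ (2 * 0 + 1) := by
        simp only [Nat.cast_zero, mul_zero, zero_add, pow_one]
        field_simp
    _ ≤ log (1 + t) := le_hasSum hsum 0 fun k _ ↦ by positivity

lemma le_log_two_add {s : ℝ} (h0 : 0 ≤ s) (h1 : s ≤ 1) : s ≤ log (2 + s) := by
  have hpade := two_mul_div_two_add_le_log_one_add (t := 1 + s) (by linarith)
  rw [show 1 + (1 + s) = 2 + s by ring] at hpade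
  refine le_trans ?_ hpade
  rw [le_div_iff₀ (by linarith)]
  nlinarith

lemma bennettFun_le_sq {t : ℝ} (ht : -1 ≤ t) : bennettFun t ≤ t ^ 2 := by
  have hx : 0 ≤ 1 + t := by linarith
  have hlog : (1 + t) * log (1 + t) ≤ (1 + t) * t := by
    obtain hx0 | hx0 := hx.eq_or_lt
    · rw [← hx0]; simp
    · exact mul_le_mul_of_nonneg_left (by linarith [log_le_sub_one_of_pos hx0]) hx
  rw [bennettFun]
  nlinarith

lemma bennettFun_le_abs_mul_log_two_add {t : ℝ} (ht : -1 ≤ t) :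
    bennettFun t ≤ |t| * log (2 + |t|) := by
  rcases le_or_gt 0 t with h0 | h0
  · rw [abs_of_nonneg h0, bennettFun]
    have hlog : log (1 + t) ≤ t := by linarith [log_le_sub_one_of_pos (by linarith : 0 < 1 + t)]
    have hmono : log (1 + t) ≤ log (2 + t) := log_le_log (by linarith) (by linarith)
    nlinarith [mul_le_mul_of_nonneg_left hmono h0]
  · rw [abs_of_neg h0]
    have := mul_le_mul_of_nonneg_left (le_log_two_add (s := -t) (by linarith) (by linarith))
      (by linarith : 0 ≤ -t)
    nlinarith [bennettFun_le_sq ht]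

lemma sq_div_two_le_bennettFun {t : ℝ} (h1 : -1 ≤ t) (h0 : t ≤ 0) :
    t ^ 2 / 2 ≤ bennettFun t := by
  obtain rfl | hx := h1.eq_or_lt
  · norm_num [bennettFun]
  have hx : 0 < 1 + t := by linarith
  -- `sinh u ≤ u` for `u = log (1 + t) ≤ 0`
  have hsinh : ((1 + t) - (1 + t)⁻¹) / 2 ≤ log (1 + t) := by
    rw [← sinh_log hx, sinh_le_self_iff]
    exact log_nonpos hx.le (by linarith)
  have := mul_le_mul_of_nonneg_left hsinh hx.le
  have hinv : (1 + t) * (1 + t)⁻¹ = 1 := mul_inv_cancel₀ hx.ne'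
  rw [bennettFun]
  nlinarith

lemma hasDerivAt_bennettFun {t : ℝ} (ht : -1 < t) : HasDerivAt bennettFun (log (1 + t)) t := by
  have hlin : HasDerivAt (fun z : ℝ ↦ 1 + z) 1 t := (hasDerivAt_id t).const_add 1
  refine ((hlin.mul (hlin.log (by linarith))).sub (hasDerivAt_id t)).congr_deriv ?_
  field_simp [show 1 + t ≠ 0 by linarith]
  ring

lemma three_mul_sq_le_mul_bennettFun {t : ℝ} (ht : 0 ≤ t) :
    3 * t ^ 2 ≤ (6 + 2 * t) * bennettFun t := by
  let H : ℝ → ℝ := fun s ↦ (6 + 2 * s) * bennettFun s - 3 * s ^ 2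
  have hderiv : ∀ s, 0 ≤ s → HasDerivAt H ((8 + 4 * s) * log (1 + s) - 8 * s) s := by
    intro s hs
    refine ((((hasDerivAt_id s).const_mul 2).const_add 6).mul
      (hasDerivAt_bennettFun (by linarith))).sub ((hasDerivAt_pow 2 s).const_mul 3)
      |>.congr_deriv ?_
    simp only [bennettFun, id, Nat.cast_ofNat]
    ring
  have hmono : MonotoneOn H (Ici 0) := by
    refine monotoneOn_of_hasDerivWithinAt_nonneg (convex_Ici 0)
      (fun s hs ↦ (hderiv s hs).continuousAt.continuousWithinAt)
      (fun s hs ↦ (hderiv s (le_of_lt (by simpa using hs))).hasDerivWithinAt) ?_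
    intro s hs
    rw [interior_Ici, mem_Ioi] at hs
    have hpade := two_mul_div_two_add_le_log_one_add hs.le
    rw [div_le_iff₀ (by linarith)] at hpade
    nlinarith
  have hH0 : H 0 = 0 := by simp [H, bennettFun]
  have hHt : H 0 ≤ H t := hmono (mem_Ici.2 le_rfl) ht ht
  simp only [hH0, H] at hHt
  linarith

lemma mul_log_two_add_le_three_mul_bennettFun {t : ℝ} (ht : 0 ≤ t) (ht2 : 2 ≤ t ^ 2) :
    t * log (2 + t) ≤ 3 * bennettFun t := by
  have hx : 0 < 1 + t := by linarith
  have hlog_two_add : log (2 + t) ≤ log (1 + t) + 1 / (1 + t) := by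
    have h := log_le_sub_one_of_pos (by positivity : 0 < (2 + t) / (1 + t))
    rw [log_div (by linarith) hx.ne'] at h
    have he : (2 + t) / (1 + t) - 1 = 1 / (1 + t) := by field_simp; ring
    linarith
  have hpade := two_mul_div_two_add_le_log_one_add ht
  have hrat : 3 * t + t / (1 + t) ≤ (3 + 2 * t) * (2 * t / (2 + t)) := by
    rw [← sub_nonneg]
    have he : (3 + 2 * t) * (2 * t / (2 + t)) - (3 * t + t / (1 + t))
        = t * (t ^ 2 - 2) / ((2 + t) * (1 + t)) := by
      field_simp
      ring
    rw [he]
    exact div_nonneg (mul_nonneg ht (by linarith)) (by positivity)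
  have h1 := mul_le_mul_of_nonneg_left hlog_two_add ht
  have h2 := mul_le_mul_of_nonneg_left hpade (by linarith : 0 ≤ 3 + 2 * t)
  rw [mul_add, mul_one_div] at h1
  rw [bennettFun]
  nlinarith

lemma one_third_min_le_bennettFun {t : ℝ} (ht : -1 ≤ t) :
    1 / 3 * min (t ^ 2) (|t| * log (2 + |t|)) ≤ bennettFun t := by
  rcases le_or_gt t 0 with h0 | h0
  · nlinarith [sq_div_two_le_bennettFun ht h0, min_le_left (t ^ 2) (|t| * log (2 + |t|)),
      sq_nonneg t]
  rcases le_or_gt (t ^ 2) 2 with h2 | h2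
  · have hbennett := three_mul_sq_le_mul_bennettFun h0.le
    have ht32 : t ≤ 3 / 2 := by nlinarith
    have hnonneg : 0 ≤ bennettFun t := by nlinarith
    nlinarith [min_le_left (t ^ 2) (|t| * log (2 + |t|))]
  · rw [abs_of_pos h0]
    linarith [mul_log_two_add_le_three_mul_bennettFun h0.le h2.le,
      min_le_right (t ^ 2) (t * log (2 + t))]

theorem stmt0 (a b : ℝ) (hb : 0 < b) (ha : -b ≤ a) :
    (1 / 3) * min (a ^ 2 / b) (|a| * Real.log (2 + |a| / b)) ≤ f a b ∧
      f a b ≤ min (a ^ 2 / b) (|a| * Real.log (2 + |a| / b)) := by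
  have ht : -1 ≤ a / b := by rw [le_div_iff₀ hb]; linarith
  have hmin : min (a ^ 2 / b) (|a| * log (2 + |a| / b))
      = b * min ((a / b) ^ 2) (|a / b| * log (2 + |a / b|)) := by
    rw [mul_min_of_nonneg _ _ hb.le, abs_div, abs_of_pos hb]
    congr 1 <;> field_simp
  rw [hmin, f_eq_mul_bennettFun a hb.ne', mul_left_comm]
  exact ⟨mul_le_mul_of_nonneg_left (one_third_min_le_bennettFun ht) hb.le,
    mul_le_mul_of_nonneg_left
      (le_min (bennettFun_le_sq ht) (bennettFun_le_abs_mul_log_two_add ht)) hb.le⟩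
end

section
/- Let p, q ∈ (0,1] and let Δ be a real number with −p·q ≤ Δ ≤ min(p,q) − p·q. Then f(Δ, p·q) ≤ 1. -/
open Real Set InformationTheory

lemma f_eq_mul_klFun (a : ℝ) {b : ℝ} (hb : b ≠ 0) : f a b = b * klFun (1 + a / b) := by
  rw [f, klFun_apply]
  field_simp
  ring

lemma klFun_le_sq_sub_one {x : ℝ} (hx : 0 ≤ x) : klFun x ≤ (x - 1) ^ 2 := by
  rcases hx.eq_or_lt with rfl | hx
  · simp [klFun_zero]
  · have := mul_le_mul_of_nonneg_left (log_le_sub_one_of_pos hx) hx.le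
    rw [klFun_apply]
    nlinarith

lemma mul_mul_klFun_le_one {m M t : ℝ} (hm : 0 < m) (hmM : m ≤ M) (hM : M ≤ 1)
    (ht : t ∈ Icc 0 M⁻¹) : m * M * klFun t ≤ 1 := by
  have hM0 : 0 < M := hm.trans_le hmM
  have hmax := convexOn_klFun.le_max_of_mem_Icc self_mem_Ici (inv_nonneg.2 hM0.le) ht
  rw [klFun_zero] at hmax
  have hend : m * M * klFun M⁻¹ ≤ 1 :=
    calc m * M * klFun M⁻¹ ≤ m * M * (M⁻¹ - 1) ^ 2 := by
          gcongr
          exact klFun_le_sq_sub_one (inv_nonneg.2 hM0.le)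
      _ = m / M * (1 - M) ^ 2 := by field_simp
      _ ≤ 1 * 1 := by
          gcongr
          · exact (div_le_one hM0).2 hmM
          · exact pow_le_one₀ (by linarith) (by linarith)
      _ = 1 := one_mul 1
  calc m * M * klFun t ≤ m * M * max 1 (klFun M⁻¹) := by gcongr
    _ = max (m * M) (m * M * klFun M⁻¹) := by rw [mul_max_of_nonneg _ _ (by positivity), mul_one]
    _ ≤ 1 := max_le (by nlinarith) hend

theorem stmt1 (p q Δ : ℝ) (hp : p ∈ Set.Ioc (0 : ℝ) 1) (hq : q ∈ Set.Ioc (0 : ℝ) 1)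
    (h1 : -(p * q) ≤ Δ) (h2 : Δ ≤ min p q - p * q) :
    f Δ (p * q) ≤ 1 := by
  have hpq : 0 < p * q := mul_pos hp.1 hq.1
  have hmin : 0 < min p q := lt_min hp.1 hq.1
  have hshift : 1 + Δ / (p * q) = (Δ + p * q) / (p * q) := by
    rw [add_div, div_self hpq.ne', add_comm]
  have hmax_inv : (max p q)⁻¹ = min p q / (p * q) := by
    rw [← min_mul_max p q]; field_simp
  have ht : 1 + Δ / (p * q) ∈ Icc 0 (max p q)⁻¹ := by
    rw [hshift, hmax_inv]
    exact ⟨div_nonneg (by linarith) hpq.le, by gcongr; linarith⟩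
  have := mul_mul_klFun_le_one hmin min_le_max (max_le hp.2 hq.2) ht
  rwa [min_mul_max, ← f_eq_mul_klFun Δ hpq.ne'] at this
end

section
/- There is a universal constant c > 0 such that for all p, q ∈ (0,1] and all real Δ with −p·q ≤ Δ ≤ min(p,q) − p·q and f(Δ, p·q) > 0, one has min(p, q, |Δ|) ≥ c · f(Δ, p·q) / log(3 / f(Δ, p·q)). -/
/-!
Set `t = 1 + Δ/(pq)` and `m = min p q`, so that `|Δ| ≤ m` and `(Δ + pq)² ≤ m² ≤ pq`.
If `Δ ≤ 0` then `log t ≤ 0`, hence `f ≤ |Δ| ≤ 1` and `log (3/f) ≥ log 2 > 1/2`.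
If `Δ > 0` then `log t ≤ t - 1` gives `f ≤ Δ log t`, while `(Δ + pq) t ≤ 1` gives `f t ≤ log t < 2 √t`,
so `√t ≤ 3/f`, i.e. `log t ≤ 2 log (3/f)`. Either way `f ≤ 2 |Δ| log (3/f)`, and `c = 1/2` works.
-/

open Real

lemma log_le_two_mul_log_three_div {y t : ℝ} (hy : 0 < y) (ht : 0 < t) (hyt : y * t ≤ log t) :
    log t ≤ 2 * log (3 / y) := by
  set s := √t
  have hs : 0 < s := sqrt_pos.mpr ht
  have hst : s ^ 2 = t := sq_sqrt ht.le
  have hlog : log s = log t / 2 := log_sqrt ht.le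
  have hlog_le : log s ≤ s - 1 := log_le_sub_one_of_pos hs
  have hys : y * s ≤ 3 := by nlinarith
  have hs_le : s ≤ 3 / y := by rwa [le_div_iff₀ hy, mul_comm]
  linarith [log_le_log hs hs_le]

section f

variable {a b : ℝ}

lemma f_le_neg (hb : 0 < b) (hab : -b ≤ a) (ha : a ≤ 0) : f a b ≤ -a := by
  have ht0 : 0 ≤ 1 + a / b := by
    have : -1 ≤ a / b := by rw [le_div_iff₀ hb]; linarith
    linarith
  have ht1 : 1 + a / b ≤ 1 := by linarith [div_nonpos_of_nonpos_of_nonneg ha hb.le]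
  have hlog : log (1 + a / b) ≤ 0 := log_nonpos ht0 ht1
  have : 0 ≤ a + b := by linarith
  unfold f
  nlinarith

lemma f_le_mul_log (hb : 0 < b) (hab : -b < a) : f a b ≤ a * log (1 + a / b) := by
  have ht : 0 < 1 + a / b := by
    have : -1 < a / b := by rw [lt_div_iff₀ hb]; linarith
    linarith
  have hlog : b * log (1 + a / b) ≤ a := by
    have := mul_le_mul_of_nonneg_left (log_le_sub_one_of_pos ht) hb.le
    rwa [add_sub_cancel_left, mul_div_cancel₀ _ hb.ne'] at this
  unfold f
  linarith

lemma f_mul_le_log (hb : 0 < b) (ha : 0 ≤ a) (hsq : (a + b) ^ 2 ≤ b) :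
    f a b * (1 + a / b) ≤ log (1 + a / b) := by
  set t := 1 + a / b
  have hlog : 0 ≤ log t := log_nonneg (by linarith [div_nonneg ha hb.le])
  have hbt : b * t = a + b := by
    simp only [t]; field_simp; ring
  have hmass : (a + b) * t ≤ 1 := by nlinarith
  have hft : f a b ≤ (a + b) * log t := by unfold f; linarith
  calc f a b * t ≤ (a + b) * log t * t := by gcongr
    _ = (a + b) * t * log t := by ring
    _ ≤ log t := mul_le_of_le_one_left hlog hmass

lemma f_le_two_mul_abs_mul_log_three_div (hb : 0 < b) (hb1 : b ≤ 1) (hab : -b ≤ a)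
    (hsq : (a + b) ^ 2 ≤ b) (hf : 0 < f a b) : f a b ≤ 2 * |a| * log (3 / f a b) := by
  rcases le_or_gt a 0 with ha | ha
  · have hfa : f a b ≤ -a := f_le_neg hb hab ha
    have hlog : 1 / 2 ≤ log (3 / f a b) := by
      have h2 : 2 ≤ 3 / f a b := by rw [le_div_iff₀ hf]; linarith
      linarith [log_le_log two_pos h2, log_two_gt_d9]
    rw [abs_of_nonpos ha]
    nlinarith
  · have ht : 0 < 1 + a / b := by linarith [div_pos ha hb]
    have hlog := log_le_two_mul_log_three_div hf ht (f_mul_le_log hb ha.le hsq)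
    rw [abs_of_pos ha]
    calc f a b ≤ a * log (1 + a / b) := f_le_mul_log hb (by linarith)
      _ ≤ a * (2 * log (3 / f a b)) := by gcongr
      _ = 2 * a * log (3 / f a b) := by ring

end f

theorem stmt2 :
    ∃ c : ℝ, 0 < c ∧
      ∀ p q Δ : ℝ, p ∈ Set.Ioc (0 : ℝ) 1 → q ∈ Set.Ioc (0 : ℝ) 1 →
        -(p * q) ≤ Δ → Δ ≤ min p q - p * q → 0 < f Δ (p * q) →
        c * f Δ (p * q) / Real.log (3 / f Δ (p * q)) ≤ min (min p q) |Δ| := by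
  refine ⟨1 / 2, by norm_num, fun p q Δ ⟨hp0, hp1⟩ ⟨hq0, hq1⟩ hlow hupp hf => ?_⟩
  have hb : 0 < p * q := mul_pos hp0 hq0
  have hbmin : p * q ≤ min p q := le_min (by nlinarith) (by nlinarith)
  have hb1 : p * q ≤ 1 := hbmin.trans ((min_le_left p q).trans hp1)
  have habs : |Δ| ≤ min p q := abs_le.mpr ⟨by linarith, by linarith⟩
  have hsq : (Δ + p * q) ^ 2 ≤ p * q := by
    have hmin_sq : min p q * min p q ≤ p * q :=
      mul_le_mul (min_le_left p q) (min_le_right p q) (le_min hp0.le hq0.le) hp0.le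
    nlinarith
  have key := f_le_two_mul_abs_mul_log_three_div hb hb1 hlow hsq hf
  have hlog : 0 < log (3 / f Δ (p * q)) :=
    pos_of_mul_pos_right (hf.trans_le key) (by positivity)
  rw [min_eq_right habs, div_le_iff₀ hlog]
  linarith
end

section
/- Let T₁ and T₂ be two spanning trees on the same finite vertex set V, with edge sets E(T₁) and E(T₂). Let E = E(T₁) \ E(T₂) and F = E(T₂) \ E(T₁). Then there exists a bijection σ : E → F such that for every e ∈ E, the edge set (E(T₁) \ {e}) ∪ {σ(e)} is again the edge set of a spanning tree on V. -/
/-!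
By Hall's marriage theorem it suffices to show that every set `S` of edges of `T₁ \ T₂` has at
least `|S|` exchange partners in `T₂ \ T₁`. Let `N` be this set of partners. An edge `pq` of `T₂`
either survives in `T₁ \ S`, or joins vertices already connected in `T₁ \ S`, or else a single
`e ∈ S` separates `p` from `q` in `T₁`, and then `T₁ - e + pq` is a tree, i.e. `pq ∈ N`. So
`(T₁ \ S) ∪ N` connects everything `T₂` connects; being connected it has at least `|T₁|` edges,
whence `|N| ≥ |S|`. The resulting injection is a bijection because `|T₁| = |T₂|`.
-/

open SimpleGraph Finset

namespace SimpleGraph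

variable {V : Type*} {G H : SimpleGraph V}

lemma Reachable.of_forall_adj_reachable (h : ∀ ⦃u v⦄, G.Adj u v → H.Reachable u v) {u v : V}
    (huv : G.Reachable u v) : H.Reachable u v := by
  obtain ⟨w⟩ := huv
  induction w with
  | nil => rfl
  | cons hadj _ ih => exact (h hadj).trans ih

lemma Connected.of_forall_adj_reachable (hG : G.Connected)
    (h : ∀ ⦃u v⦄, G.Adj u v → H.Reachable u v) : H.Connected :=
  have := hG.nonempty
  ⟨fun _ _ => (hG.preconnected _ _).of_forall_adj_reachable h⟩

lemma Connected.reachable_deleteEdges_or (hG : G.Connected) (a b x : V) :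
    (G.deleteEdges {s(a, b)}).Reachable x a ∨ (G.deleteEdges {s(a, b)}).Reachable x b := by
  classical
  obtain ⟨p, hp⟩ := hG.exists_isPath x a
  by_cases hab : s(a, b) ∈ p.edges
  · have hb := p.snd_mem_support_of_mem_edges hab
    have ha := Walk.endpoint_notMem_support_takeUntil hp hb (p.adj_of_mem_edges hab).ne
    refine .inr ⟨(p.takeUntil b hb).toDeleteEdges _ fun e he hea => ?_⟩
    rw [Set.mem_singleton_iff] at hea
    exact ha ((p.takeUntil b hb).fst_mem_support_of_mem_edges (hea ▸ he))
  · exact .inl ⟨p.toDeleteEdges _ fun e he hea => hab (Set.mem_singleton_iff.mp hea ▸ he)⟩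

lemma IsAcyclic.not_reachable_deleteEdges_of_mem_edges (hG : G.IsAcyclic) {x y : V}
    {p : G.Walk x y} (hp : p.IsPath) {e : Sym2 V} (he : e ∈ p.edges) :
    ¬(G.deleteEdges {e}).Reachable x y := by
  classical
  induction e with | h a b =>
  rw [reachable_deleteEdges_iff_exists_walk]
  rintro ⟨q, hq⟩
  have hpq : (⟨p, hp⟩ : G.Path x y) = q.toPath := (hG.subsingleton_path x y).elim _ _
  exact hq (q.edges_toPath_subset_edges (hpq ▸ he))

lemma IsTree.exists_not_reachable_deleteEdges_singleton (hG : G.IsTree) {s : Set (Sym2 V)}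
    {x y : V} (h : ¬(G.deleteEdges s).Reachable x y) :
    ∃ e ∈ s, ¬(G.deleteEdges {e}).Reachable x y := by
  obtain ⟨p, hp⟩ := hG.connected.exists_isPath x y
  obtain ⟨e, hes, hep⟩ := p.exists_mem_edges_of_not_reachable_deleteEdges h
  exact ⟨e, hes, hG.isAcyclic.not_reachable_deleteEdges_of_mem_edges hp hep⟩

lemma fromEdgeSet_sdiff_union_singleton (G : SimpleGraph V) (e : Sym2 V) (u v : V) :
    fromEdgeSet ((G.edgeSet \ {e}) ∪ {s(u, v)}) = G.deleteEdges {e} ⊔ edge u v := by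
  ext x y
  simp only [fromEdgeSet_adj, sup_adj, deleteEdges_adj, edge_adj, Set.mem_union, Set.mem_sdiff,
    Set.mem_singleton_iff, mem_edgeSet, Sym2.eq_iff]
  grind [Adj.ne]

lemma IsTree.isTree_sdiff_union_of_not_reachable (hG : G.IsTree) {e : Sym2 V} {u v : V}
    (h : ¬(G.deleteEdges {e}).Reachable u v) :
    (fromEdgeSet ((G.edgeSet \ {e}) ∪ {s(u, v)})).IsTree := by
  rw [fromEdgeSet_sdiff_union_singleton]
  refine ⟨?_, (hG.isAcyclic.anti (deleteEdges_le _)).sup_edge_of_not_reachable h⟩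
  induction e with | h a b =>
  have hD : G.deleteEdges {s(a, b)} ≤ G.deleteEdges {s(a, b)} ⊔ edge u v := le_sup_left
  have huv : (G.deleteEdges {s(a, b)} ⊔ edge u v).Adj u v :=
    .inr ((edge_adj ..).mpr ⟨.inl ⟨rfl, rfl⟩, fun heq => h (heq ▸ .rfl)⟩)
  -- `u` and `v` lie on different sides of the cut `s(a, b)`, so the new edge rejoins them.
  have hab : (G.deleteEdges {s(a, b)} ⊔ edge u v).Reachable a b := by
    rcases hG.connected.reachable_deleteEdges_or a b u with hua | hub <;>
      rcases hG.connected.reachable_deleteEdges_or a b v with hva | hvb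
    · exact absurd (hua.trans hva.symm) h
    · exact (hua.symm.mono hD).trans (huv.reachable.trans (hvb.mono hD))
    · exact (hva.symm.mono hD).trans (huv.reachable.symm.trans (hub.mono hD))
    · exact absurd (hub.trans hvb.symm) h
  refine (connected_iff_exists_forall_reachable _).mpr ⟨a, fun x => ?_⟩
  rcases hG.connected.reachable_deleteEdges_or a b x with hxa | hxb
  · exact (hxa.mono hD).symm
  · exact hab.trans (hxb.mono hD).symm

lemma IsTree.card_le_card_of_forall_exchange_mem [Finite V] {T : SimpleGraph V} (hT : T.IsTree)
    (hG : G.Connected) {S N : Finset (Sym2 V)} (hS : ↑S ⊆ T.edgeSet \ G.edgeSet)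
    (hN : ∀ e ∈ S, ∀ f ∈ G.edgeSet \ T.edgeSet,
      (fromEdgeSet ((T.edgeSet \ {e}) ∪ {f})).IsTree → f ∈ N) :
    #S ≤ #N := by
  set H := fromEdgeSet ((T.edgeSet \ ↑S) ∪ ↑N)
  have hTH : T.deleteEdges ↑S ≤ H := fun x y hxy =>
    (fromEdgeSet_adj _).mpr ⟨.inl ((deleteEdges_adj ..).mp hxy), hxy.ne⟩
  have hH : H.Connected := hG.of_forall_adj_reachable fun p q hpq => by
    by_cases hTpq : T.Adj p q
    · exact ((fromEdgeSet_adj _).mpr ⟨.inl ⟨hTpq, fun hpqS => (hS hpqS).2 hpq⟩, hpq.ne⟩).reachable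
    by_cases hr : (T.deleteEdges ↑S).Reachable p q
    · exact hr.mono hTH
    obtain ⟨e, heS, he⟩ := hT.exists_not_reachable_deleteEdges_singleton hr
    have hpqN := hN e heS s(p, q) ⟨hpq, hTpq⟩ (hT.isTree_sdiff_union_of_not_reachable he)
    exact ((fromEdgeSet_adj _).mpr ⟨.inr hpqN, hpq.ne⟩).reachable
  have hTcard := (isTree_iff_connected_and_card.mp hT).2
  have hHcard := hH.card_vert_le_card_edgeSet_add_one
  have hSsub : (T.edgeSet \ ↑S).ncard + (↑S : Set (Sym2 V)).ncard = T.edgeSet.ncard :=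
    Set.ncard_sdiff_add_ncard_of_subset fun e he => (hS he).1
  have hHN : H.edgeSet.ncard ≤ (T.edgeSet \ ↑S).ncard + (↑N : Set (Sym2 V)).ncard :=
    (Set.ncard_le_ncard (edgeSet_fromEdgeSet _ ▸ Set.sdiff_subset)).trans (Set.ncard_union_le _ _)
  rw [Set.ncard_coe_finset] at hSsub hHN
  rw [Nat.card_coe_set_eq] at hTcard hHcard
  omega

lemma IsTree.ncard_edgeSet_sdiff_comm [Finite V] {T : SimpleGraph V} (hG : G.IsTree)
    (hT : T.IsTree) : (G.edgeSet \ T.edgeSet).ncard = (T.edgeSet \ G.edgeSet).ncard := by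
  have hGcard := (isTree_iff_connected_and_card.mp hG).2
  have hTcard := (isTree_iff_connected_and_card.mp hT).2
  rw [Nat.card_coe_set_eq] at hGcard hTcard
  exact (Set.ncard_eq_ncard_iff_ncard_sdiff_eq_ncard_sdiff).1 (by omega)

end SimpleGraph

/-- Edge-swap pairing for spanning trees: the edges of `T₁ \ T₂` and `T₂ \ T₁`
can be put in bijection `σ` so that exchanging `e` for `σ e` in `T₁` always
yields a spanning tree. -/
theorem stmt5 {V : Type*} [Fintype V] (T₁ T₂ : SimpleGraph V)
    (h₁ : T₁.IsTree) (h₂ : T₂.IsTree) :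
    ∃ σ : (T₁.edgeSet \ T₂.edgeSet : Set (Sym2 V)) ≃
          (T₂.edgeSet \ T₁.edgeSet : Set (Sym2 V)),
      ∀ e : (T₁.edgeSet \ T₂.edgeSet : Set (Sym2 V)),
        (SimpleGraph.fromEdgeSet ((T₁.edgeSet \ {e.1}) ∪ {(σ e).1})).IsTree := by
  classical
  let partners (e : Sym2 V) : Finset (Sym2 V) :=
    {f | f ∈ T₂.edgeSet \ T₁.edgeSet ∧ (fromEdgeSet ((T₁.edgeSet \ {e}) ∪ {f})).IsTree}
  obtain ⟨σ, hσ, hσe⟩ := (all_card_le_biUnion_card_iff_exists_injective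
      fun e : ↥(T₁.edgeSet \ T₂.edgeSet) => partners e).mp fun A => by
    rw [← card_map (Function.Embedding.subtype _)]
    refine h₁.card_le_card_of_forall_exchange_mem h₂.connected (fun e he => ?_)
      fun e he f hf hfe => mem_biUnion.mpr ?_
    · obtain ⟨e, -, rfl⟩ := mem_map.mp he
      exact e.2
    · obtain ⟨e, heA, rfl⟩ := mem_map.mp he
      exact ⟨e, heA, mem_filter.mpr ⟨mem_univ _, hf, hfe⟩⟩
  simp only [partners, mem_filter, mem_univ, true_and] at hσe
  have hcard : Nat.card ↥(T₂.edgeSet \ T₁.edgeSet) ≤ Nat.card ↥(T₁.edgeSet \ T₂.edgeSet) :=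
    (h₁.ncard_edgeSet_sdiff_comm h₂).ge
  let σ' (e : ↥(T₁.edgeSet \ T₂.edgeSet)) : ↥(T₂.edgeSet \ T₁.edgeSet) := ⟨σ e, (hσe e).1⟩
  have hσ' : σ'.Injective := fun a b hab => hσ (congrArg Subtype.val hab)
  exact ⟨.ofBijective σ' (hσ'.bijective_of_nat_card_le hcard), fun e => (hσe e).2⟩
end

section
/- Let Σ be a finite set, T a tree on vertex set {1,…,n} with a fixed root r and parent map pa, and let P, Q be probability mass functions on Σⁿ such that Q(x) > 0 for all x and Q is T-structured, i.e., Q(x) = Q_r(x_r)·∏_{v≠r} Q_{v|pa(v)}(x_v | x_{pa(v)}) where Q_{v|pa(v)}(b|a) = Q_{(pa(v),v)}(a,b)/Q_{pa(v)}(a). Then D(P‖Q) = (−H(P) + Σ_{v=1}^{n} H(P_v)) − Σ_{v≠r} I(X_v; X_{pa(v)}) + D(P_r ‖ Q_r) + Σ_{v≠r} Σ_{a∈Σ} P_{pa(v)}(a) · D( P_{v|pa(v)=a} ‖ Q_{v|pa(v)=a} ), where terms with P_{pa(v)}(a) = 0 contribute 0, and P_{v|pa(v)=a} denotes the conditional distribution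 of coordinate v under P given that coordinate pa(v) equals a. -/
/-!
Every term of the right-hand side is an expectation under `P` of a log-ratio of marginals
evaluated at `x`: `∑ a, P_v(a) f(a) = ∑ x, P(x) f(x_v)`, and in the conditional divergences the
weight `P_{pa(v)}(a)` cancels the denominator of the conditional pmf. The identity is then
pointwise in `x`. On the support of `P` every marginal of `P` and `Q` at `x` is positive, the
factorization of `Q` splits `log Q(x)` into log-marginals, and all log-marginals cancel.
-/

open scoped Classical

noncomputable section

/-- Marginal of a pmf on `Σⁿ` at coordinate `v`. -/
def marg {n : ℕ} {α : Type*} [Fintype α] (P : (Fin n → α) → ℝ) (v : Fin n) (a : α) : ℝ :=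
  ∑ x : Fin n → α, if x v = a then P x else 0

/-- Marginal of a pmf on `Σⁿ` at the pair of coordinates `(u, v)`. -/
def marg2 {n : ℕ} {α : Type*} [Fintype α] (P : (Fin n → α) → ℝ) (u v : Fin n)
    (a b : α) : ℝ :=
  ∑ x : Fin n → α, if x u = a ∧ x v = b then P x else 0

/-- KL divergence `D(P‖Q)`; terms with `P x = 0` vanish automatically. -/
def KL {β : Type*} [Fintype β] (P Q : β → ℝ) : ℝ :=
  ∑ x, P x * Real.log (P x / Q x)

/-- Shannon entropy; terms with `P x = 0` vanish automatically. -/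
def ent {β : Type*} [Fintype β] (P : β → ℝ) : ℝ :=
  -∑ x, P x * Real.log (P x)

/-- Pairwise mutual information `I(X_u; X_v)` of coordinates `u, v` under `P`. -/
def miC {n : ℕ} {α : Type*} [Fintype α] (P : (Fin n → α) → ℝ) (u v : Fin n) : ℝ :=
  ∑ a, ∑ b, marg2 P u v a b *
    Real.log (marg2 P u v a b / (marg P u a * marg P v b))

section Marginals

variable {n : ℕ} {α : Type*} [Fintype α]

lemma sum_marg_mul (P : (Fin n → α) → ℝ) (v : Fin n) (f : α → ℝ) :
    ∑ a, marg P v a * f a = ∑ x, P x * f (x v) := by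
  simp only [marg, Finset.sum_mul, ite_mul, zero_mul]
  rw [Finset.sum_comm]
  simp

lemma sum_marg2_mul (P : (Fin n → α) → ℝ) (u v : Fin n) (f : α → α → ℝ) :
    ∑ a, ∑ b, marg2 P u v a b * f a b = ∑ x, P x * f (x u) (x v) := by
  simp only [marg2, Finset.sum_mul, ite_mul, zero_mul, ite_and]
  rw [Finset.sum_congr rfl fun a _ => Finset.sum_comm, Finset.sum_comm]
  simp

lemma marg2_comm (P : (Fin n → α) → ℝ) (u v : Fin n) (a b : α) :
    marg2 P u v a b = marg2 P v u b a :=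
  Finset.sum_congr rfl fun _ _ => if_congr and_comm rfl rfl

variable {P : (Fin n → α) → ℝ}

lemma le_marg (hP0 : ∀ x, 0 ≤ P x) (x : Fin n → α) (v : Fin n) :
    P x ≤ marg P v (x v) := by
  unfold marg
  simpa using Finset.single_le_sum (f := fun y : Fin n → α => if y v = x v then P y else 0)
    (fun y _ => by split <;> simp [hP0 y]) (Finset.mem_univ x)

lemma le_marg2 (hP0 : ∀ x, 0 ≤ P x) (x : Fin n → α) (u v : Fin n) :
    P x ≤ marg2 P u v (x u) (x v) := by
  unfold marg2
  simpa using Finset.single_le_sum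
    (f := fun y : Fin n → α => if y u = x u ∧ y v = x v then P y else 0)
    (fun y _ => by split <;> simp [hP0 y]) (Finset.mem_univ x)

lemma marg2_eq_zero_of_marg_eq_zero (hP0 : ∀ x, 0 ≤ P x) {u : Fin n} {a : α}
    (h : marg P u a = 0) (v : Fin n) (b : α) : marg2 P u v a b = 0 := by
  refine le_antisymm ?_ (Finset.sum_nonneg fun x _ => by split <;> simp [hP0 x])
  rw [← h]
  refine Finset.sum_le_sum fun x _ => ?_
  split_ifs <;> simp_all

end Marginals

section Expectations

variable {n : ℕ} {α : Type*} [Fintype α] (P : (Fin n → α) → ℝ)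

lemma sum_sum_mul_comm {ι β : Type*} [Fintype β] (s : Finset ι) (p : β → ℝ)
    (g : ι → β → ℝ) : ∑ i ∈ s, ∑ x, p x * g i x = ∑ x, p x * ∑ i ∈ s, g i x := by
  simp only [Finset.mul_sum]
  exact Finset.sum_comm

lemma sum_ent_marg :
    ∑ v, ent (fun a => marg P v a) = -∑ x, P x * ∑ v, Real.log (marg P v (x v)) := by
  simp only [ent, sum_marg_mul P _ fun a => Real.log (marg P _ a), Finset.sum_neg_distrib,
    sum_sum_mul_comm]

lemma sum_miC (s : Finset (Fin n)) (pa : Fin n → Fin n) :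
    ∑ v ∈ s, miC P v (pa v) = ∑ x, P x * ∑ v ∈ s,
      Real.log (marg2 P v (pa v) (x v) (x (pa v)) /
        (marg P v (x v) * marg P (pa v) (x (pa v)))) := by
  simp only [miC, sum_marg2_mul P _ _ fun a b =>
    Real.log (marg2 P _ _ a b / (marg P _ a * marg P _ b)), sum_sum_mul_comm]

lemma KL_marg (Q : (Fin n → α) → ℝ) (v : Fin n) :
    KL (fun a => marg P v a) (fun a => marg Q v a) =
      ∑ x, P x * Real.log (marg P v (x v) / marg Q v (x v)) :=
  sum_marg_mul P v fun a => Real.log (marg P v a / marg Q v a)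

lemma sum_marg_mul_KL_cond (hP0 : ∀ x, 0 ≤ P x) (Q : (Fin n → α) → ℝ)
    (s : Finset (Fin n)) (pa : Fin n → Fin n) :
    ∑ v ∈ s, ∑ a, marg P (pa v) a *
        KL (fun b => marg2 P (pa v) v a b / marg P (pa v) a)
          (fun b => marg2 Q (pa v) v a b / marg Q (pa v) a) =
      ∑ x, P x * ∑ v ∈ s,
        Real.log ((marg2 P (pa v) v (x (pa v)) (x v) / marg P (pa v) (x (pa v))) /
          (marg2 Q (pa v) v (x (pa v)) (x v) / marg Q (pa v) (x (pa v)))) := by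
  rw [← sum_sum_mul_comm]
  refine Finset.sum_congr rfl fun v _ => ?_
  rw [← sum_marg2_mul P (pa v) v fun a b =>
    Real.log ((marg2 P (pa v) v a b / marg P (pa v) a) / (marg2 Q (pa v) v a b / marg Q (pa v) a))]
  simp only [KL, Finset.mul_sum, ← mul_assoc]
  refine Finset.sum_congr rfl fun a _ => Finset.sum_congr rfl fun b _ => ?_
  rcases eq_or_ne (marg P (pa v) a) 0 with h | h
  · -- the conditional pmf is junk here (`_ / 0 = 0`), but its weight vanishes
    simp [h, marg2_eq_zero_of_marg_eq_zero hP0 h]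
  · rw [mul_div_cancel₀ _ h]

end Expectations

section Decomposition

variable {n : ℕ} {α : Type*} [Fintype α] {P Q : (Fin n → α) → ℝ} {r : Fin n}
  {pa : Fin n → Fin n}

lemma log_eq_of_factorization (hQpos : ∀ x, 0 < Q x) (x : Fin n → α)
    (hQx : Q x = marg Q r (x r) *
      ∏ v ∈ Finset.univ.filter (fun v => v ≠ r),
        marg2 Q (pa v) v (x (pa v)) (x v) / marg Q (pa v) (x (pa v))) :
    Real.log (Q x) = Real.log (marg Q r (x r)) + ∑ v ∈ Finset.univ.filter (fun v => v ≠ r),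
      (Real.log (marg2 Q (pa v) v (x (pa v)) (x v)) - Real.log (marg Q (pa v) (x (pa v)))) := by
  have hQ0 : ∀ y, 0 ≤ Q y := fun y => (hQpos y).le
  have hm : ∀ v, 0 < marg Q v (x v) := fun v => (hQpos x).trans_le (le_marg hQ0 x v)
  have hm2 : ∀ u v, 0 < marg2 Q u v (x u) (x v) :=
    fun u v => (hQpos x).trans_le (le_marg2 hQ0 x u v)
  have hcond : ∀ v, 0 < marg2 Q (pa v) v (x (pa v)) (x v) / marg Q (pa v) (x (pa v)) :=
    fun v => div_pos (hm2 _ _) (hm _)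
  rw [hQx, Real.log_mul (hm r).ne' (Finset.prod_pos fun v _ => hcond v).ne',
    Real.log_prod fun v _ => (hcond v).ne']
  simp only [Real.log_div (hm2 _ _).ne' (hm _).ne']

lemma log_div_eq_of_factorization (hP0 : ∀ x, 0 ≤ P x) (hQpos : ∀ x, 0 < Q x)
    {x : Fin n → α} (hx : 0 < P x)
    (hQx : Q x = marg Q r (x r) *
      ∏ v ∈ Finset.univ.filter (fun v => v ≠ r),
        marg2 Q (pa v) v (x (pa v)) (x v) / marg Q (pa v) (x (pa v))) :
    Real.log (P x / Q x) =
      (Real.log (P x) - ∑ v, Real.log (marg P v (x v)))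
        - ∑ v ∈ Finset.univ.filter (fun v => v ≠ r),
            Real.log (marg2 P v (pa v) (x v) (x (pa v)) /
              (marg P v (x v) * marg P (pa v) (x (pa v))))
        + Real.log (marg P r (x r) / marg Q r (x r))
        + ∑ v ∈ Finset.univ.filter (fun v => v ≠ r),
            Real.log ((marg2 P (pa v) v (x (pa v)) (x v) / marg P (pa v) (x (pa v))) /
              (marg2 Q (pa v) v (x (pa v)) (x v) / marg Q (pa v) (x (pa v)))) := by
  have hQ0 : ∀ y, 0 ≤ Q y := fun y => (hQpos y).le
  have hPm : ∀ v, marg P v (x v) ≠ 0 := fun v => (hx.trans_le (le_marg hP0 x v)).ne'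
  have hPm2 : ∀ u v, marg2 P u v (x u) (x v) ≠ 0 :=
    fun u v => (hx.trans_le (le_marg2 hP0 x u v)).ne'
  have hQm : ∀ v, marg Q v (x v) ≠ 0 := fun v => ((hQpos x).trans_le (le_marg hQ0 x v)).ne'
  have hQm2 : ∀ u v, marg2 Q u v (x u) (x v) ≠ 0 :=
    fun u v => ((hQpos x).trans_le (le_marg2 hQ0 x u v)).ne'
  have hsplit : ∑ v, Real.log (marg P v (x v)) =
      Real.log (marg P r (x r)) + ∑ v ∈ Finset.univ.filter (fun v => v ≠ r),
        Real.log (marg P v (x v)) := by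
    rw [Finset.filter_ne']
    exact (Finset.add_sum_erase _ _ (Finset.mem_univ r)).symm
  rw [Real.log_div hx.ne' (hQpos x).ne', log_eq_of_factorization hQpos x hQx, hsplit]
  simp only [marg2_comm P _ (pa _), Real.log_div (hPm2 _ _) (mul_ne_zero (hPm _) (hPm _)),
    Real.log_mul (hPm _) (hPm _), Real.log_div (hPm _) (hQm _),
    Real.log_div (div_ne_zero (hPm2 _ _) (hPm _)) (div_ne_zero (hQm2 _ _) (hQm _)),
    Real.log_div (hPm2 _ _) (hPm _), Real.log_div (hQm2 _ _) (hQm _),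
    Finset.sum_sub_distrib, Finset.sum_add_distrib]
  ring

end Decomposition

theorem stmt6_general {n : ℕ} {α : Type*} [Fintype α]
    (r : Fin n) (pa : Fin n → Fin n)
    (P Q : (Fin n → α) → ℝ)
    (hP0 : ∀ x, 0 ≤ P x)
    (hQpos : ∀ x, 0 < Q x)
    (hQstruct : ∀ x, Q x = marg Q r (x r) *
      ∏ v ∈ Finset.univ.filter (fun v => v ≠ r),
        marg2 Q (pa v) v (x (pa v)) (x v) / marg Q (pa v) (x (pa v))) :
    KL P Q =
      (-(ent P) + ∑ v, ent (fun a => marg P v a))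
        - (∑ v ∈ Finset.univ.filter (fun v => v ≠ r), miC P v (pa v))
        + KL (fun a => marg P r a) (fun a => marg Q r a)
        + ∑ v ∈ Finset.univ.filter (fun v => v ≠ r), ∑ a : α,
            marg P (pa v) a *
              KL (fun b => marg2 P (pa v) v a b / marg P (pa v) a)
                 (fun b => marg2 Q (pa v) v a b / marg Q (pa v) a) := by
  rw [sum_ent_marg, sum_miC, KL_marg, sum_marg_mul_KL_cond P hP0, ent, neg_neg, KL,
    ← Finset.sum_neg_distrib, ← Finset.sum_add_distrib, ← Finset.sum_sub_distrib,
    ← Finset.sum_add_distrib, ← Finset.sum_add_distrib]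
  refine Finset.sum_congr rfl fun x _ => ?_
  rcases (hP0 x).eq_or_lt with hx | hx
  · simp [← hx]
  · rw [log_div_eq_of_factorization hP0 hQpos hx (hQstruct x)]
    ring

/-- Decomposition of `D(P‖Q)` for a `T`-structured positive pmf `Q` (Lemma 2.4). -/
theorem stmt6 {n : ℕ} {α : Type*} [Fintype α]
    (T : SimpleGraph (Fin n)) (hT : T.IsTree) (r : Fin n) (pa : Fin n → Fin n)
    (hE : T.edgeSet = {e | ∃ v, v ≠ r ∧ e = s(pa v, v)})
    (P Q : (Fin n → α) → ℝ)
    (hP0 : ∀ x, 0 ≤ P x) (hP1 : ∑ x, P x = 1)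
    (hQpos : ∀ x, 0 < Q x) (hQ1 : ∑ x, Q x = 1)
    (hQstruct : ∀ x, Q x = marg Q r (x r) *
      ∏ v ∈ Finset.univ.filter (fun v => v ≠ r),
        marg2 Q (pa v) v (x (pa v)) (x v) / marg Q (pa v) (x (pa v))) :
    KL P Q =
      (-(ent P) + ∑ v, ent (fun a => marg P v a))
        - (∑ v ∈ Finset.univ.filter (fun v => v ≠ r), miC P v (pa v))
        + KL (fun a => marg P r a) (fun a => marg Q r a)
        + ∑ v ∈ Finset.univ.filter (fun v => v ≠ r), ∑ a : α,
            marg P (pa v) a *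
              KL (fun b => marg2 P (pa v) v a b / marg P (pa v) a)
                 (fun b => marg2 Q (pa v) v a b / marg Q (pa v) a) :=
  stmt6_general r pa P Q hP0 hQpos hQstruct

end
end

section
/- There is a universal constant c > 0 such that the following holds. Let Σ be a finite set, P a probability mass function on Σ×Σ, fix (x,y) ∈ Σ×Σ, and let P̂ be the empirical distribution of N > 1 i.i.d. samples from P. Then for every δ ∈ (0,1), with probability at least 1−3δ all of the following hold simultaneously: |P̂_X(x) − P_X(x)| ≤ c(√(P_X(x)·log(2/δ)/N) + log(2/δ)/N); |P̂_Y(y) − P_Y(y)| ≤ c(√(P_Y(y)·log(2/δ)/N) + log(2/δ)/N); |P̂(x,y) − P(x,y)| ≤ c(√(P(x,y)·log(2/δ)/N) + log(2/δ)/N); |P̂_X(x)P̂_Y(y) − P_X(x)P_Y(y)| ≤ c(√(P_X(x)P_Y(y)·log(2/δ)/N) + (P_X(x)+P_Y(y))·log(2/δ)/N + log²(2/δ)/N²); and |Δ̂_{xy} − Δ_{xy}| ≤ c(√(|Δ_{xy}|·log(2/δ)/N) + √(P_X(x)P_Y(y)·log(2/δ)/N) + log(2/δ)/N + log²(2/δ)/N²).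 -/
/-!
Each of `P̂_X(x)`, `P̂_Y(y)`, `P̂(x,y)` is a normalized binomial count. With `L = log (2/δ)`, a
Chernoff bound (using `exp λ ≤ 1 + λ + λ²` for `|λ| ≤ 1` and `λ = min(1, t/(2Nq))`) shows that
`|count/N - q| ≤ 2(√(qL/N) + L/N)` fails with probability at most `2 exp (-L) = δ`.
On the intersection of the three events the other two bounds are deterministic: writing the
three probabilities as `u²`, `v²`, `w²`, the product bound expands `â b̂ - u² v²` using `u, v ≤ 1`,
and the bound for `Δ̂` uses `w ≤ √|Δ| + u v`, a consequence of `w² ≤ |Δ| + u² v²`.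
-/

open scoped Classical

noncomputable section

/-- Probability of an event under a (finitely supported) density `p`. -/
def prob {Ω : Type*} [Fintype Ω] (p : Ω → ℝ) (E : Set Ω) : ℝ :=
  ∑ ω, if ω ∈ E then p ω else 0

/-- Empirical probability of `a` among the `N` samples `s`. -/
def emp {α : Type*} (N : ℕ) (s : Fin N → α) (a : α) : ℝ :=
  ((Finset.univ.filter (fun j => s j = a)).card : ℝ) / N

open Finset Real

section Prob

variable {Ω : Type*} [Fintype Ω] {p : Ω → ℝ}

lemma prob_mono (hp : ∀ ω, 0 ≤ p ω) {E F : Set Ω} (h : E ⊆ F) : prob p E ≤ prob p F := by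
  refine sum_le_sum fun ω _ => ?_
  by_cases hE : ω ∈ E
  · simp [hE, h hE]
  · by_cases hF : ω ∈ F <;> simp [hE, hF, hp ω]

lemma prob_union_le (hp : ∀ ω, 0 ≤ p ω) (E F : Set Ω) :
    prob p (E ∪ F) ≤ prob p E + prob p F := by
  rw [prob, prob, prob, ← sum_add_distrib]
  refine sum_le_sum fun ω _ => ?_
  by_cases hE : ω ∈ E <;> by_cases hF : ω ∈ F <;> simp [hE, hF, hp ω]

lemma prob_compl (hp1 : ∑ ω, p ω = 1) (E : Set Ω) : prob p Eᶜ = 1 - prob p E := by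
  rw [prob, prob, ← hp1, ← sum_sub_distrib]
  refine sum_congr rfl fun ω _ => ?_
  by_cases hE : ω ∈ E <;> simp [hE]

lemma one_sub_three_mul_le_prob_and (hp : ∀ ω, 0 ≤ p ω) (hp1 : ∑ ω, p ω = 1)
    {E F G : Ω → Prop} {ε : ℝ} (hE : prob p {ω | ¬ E ω} ≤ ε) (hF : prob p {ω | ¬ F ω} ≤ ε)
    (hG : prob p {ω | ¬ G ω} ≤ ε) :
    1 - 3 * ε ≤ prob p {ω | E ω ∧ F ω ∧ G ω} := by
  have hcompl : {ω | E ω ∧ F ω ∧ G ω}ᶜ = {ω | ¬ E ω} ∪ ({ω | ¬ F ω} ∪ {ω | ¬ G ω}) := by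
    ext ω; simp only [Set.mem_compl_iff, Set.mem_union, Set.mem_ofPred_eq]; tauto
  have := prob_compl hp1 {ω | E ω ∧ F ω ∧ G ω}
  rw [hcompl] at this
  linarith [prob_union_le hp {ω | ¬ E ω} ({ω | ¬ F ω} ∪ {ω | ¬ G ω}),
    prob_union_le hp {ω | ¬ F ω} {ω | ¬ G ω}]

lemma prob_le_sum_mul_exp (hp : ∀ ω, 0 ≤ p ω) (f : Ω → ℝ) (r : ℝ) :
    prob p {ω | r ≤ f ω} ≤ ∑ ω, p ω * exp (f ω - r) := by
  refine sum_le_sum fun ω _ => ?_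
  by_cases h : r ≤ f ω
  · simpa [h] using le_mul_of_one_le_right (hp ω) (one_le_exp (sub_nonneg.2 h))
  · simpa [h] using mul_nonneg (hp ω) (exp_pos _).le

end Prob

section Sampling

def sampleCount {Ω : Type*} {N : ℕ} (A : Finset Ω) (s : Fin N → Ω) : ℝ :=
  ∑ j, if s j ∈ A then 1 else 0

lemma sum_emp_eq_sampleCount_div {Ω : Type*} {N : ℕ} (A : Finset Ω) (s : Fin N → Ω) :
    ∑ ω ∈ A, emp N s ω = sampleCount A s / N := by
  simp only [emp, sampleCount, ← sum_div, card_filter, Nat.cast_sum, Nat.cast_ite,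
    Nat.cast_one, Nat.cast_zero]
  rw [sum_comm]
  simp [sum_ite_eq]

variable {Ω : Type*} [Fintype Ω] {p : Ω → ℝ} {N : ℕ}

lemma sum_prod_eq_one (hp1 : ∑ ω, p ω = 1) : ∑ s : Fin N → Ω, ∏ j, p (s j) = 1 := by
  rw [← Fintype.sum_pow, hp1, one_pow]

lemma sum_prod_mul_exp_sampleCount (hp1 : ∑ ω, p ω = 1) (A : Finset Ω) (l : ℝ) :
    ∑ s : Fin N → Ω, (∏ j, p (s j)) * exp (l * sampleCount A s) =
      (1 + (∑ ω ∈ A, p ω) * (exp l - 1)) ^ N := by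
  have hmgf : ∑ ω, p ω * exp (l * if ω ∈ A then 1 else 0) = 1 + (∑ ω ∈ A, p ω) * (exp l - 1) := by
    have hsplit : ∀ ω, p ω * exp (l * if ω ∈ A then 1 else 0) =
        p ω + if ω ∈ A then p ω * (exp l - 1) else 0 := by
      intro ω; split_ifs <;> simp; ring
    simp only [hsplit, sum_add_distrib, hp1, sum_ite_mem, univ_inter, ← sum_mul]
  rw [← hmgf, Fintype.sum_pow]
  refine sum_congr rfl fun s _ => ?_
  rw [prod_mul_distrib, sampleCount, mul_sum, exp_sum]

lemma prob_sampleCount_tail_le (hp : ∀ ω, 0 ≤ p ω) (hp1 : ∑ ω, p ω = 1) (A : Finset Ω)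
    {l : ℝ} (hl : |l| ≤ 1) (r : ℝ) :
    prob (fun s : Fin N → Ω => ∏ j, p (s j))
        {s | r ≤ l * (sampleCount A s - N * ∑ ω ∈ A, p ω)} ≤
      exp (N * (∑ ω ∈ A, p ω) * l ^ 2 - r) := by
  set q := ∑ ω ∈ A, p ω
  have hq0 : 0 ≤ q := sum_nonneg fun ω _ => hp ω
  have hq1 : q ≤ 1 := hp1 ▸ sum_le_univ_sum_of_nonneg hp
  have hexp : exp l ≤ 1 + l + l ^ 2 := by linarith [(abs_le.1 (abs_exp_sub_one_sub_id_le hl)).2]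
  have hbase : 0 ≤ 1 + q * (exp l - 1) := by nlinarith [exp_pos l]
  calc prob (fun s : Fin N → Ω => ∏ j, p (s j)) {s | r ≤ l * (sampleCount A s - N * q)}
      ≤ ∑ s : Fin N → Ω, (∏ j, p (s j)) * exp (l * (sampleCount A s - N * q) - r) :=
        prob_le_sum_mul_exp (fun s => prod_nonneg fun j _ => hp (s j)) _ r
    _ = (1 + q * (exp l - 1)) ^ N * exp (-(l * N * q) - r) := by
        rw [← sum_prod_mul_exp_sampleCount hp1, sum_mul]
        refine sum_congr rfl fun s _ => ?_
        rw [mul_assoc, ← exp_add]; ring_nf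
    _ ≤ exp (N * (q * (exp l - 1))) * exp (-(l * N * q) - r) := by
        rw [exp_nat_mul]
        gcongr
        linarith [add_one_le_exp (q * (exp l - 1))]
    _ ≤ exp (N * q * l ^ 2 - r) := by
        rw [← exp_add]
        gcongr
        nlinarith [mul_nonneg (Nat.cast_nonneg N : (0:ℝ) ≤ N) hq0]

lemma exists_chernoff_parameter {Q L : ℝ} (hQ : 0 ≤ Q) (hL : 0 < L) :
    ∃ l : ℝ, 0 ≤ l ∧ l ≤ 1 ∧ Q * l ^ 2 - l * (2 * √(Q * L) + 2 * L) ≤ -L := by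
  set t := 2 * √(Q * L) + 2 * L
  have ht2 : 4 * (Q * L) ≤ t ^ 2 := by
    nlinarith [sq_sqrt (mul_nonneg hQ hL.le), sqrt_nonneg (Q * L)]
  rcases le_or_gt (2 * Q) t with hc | hc
  · exact ⟨1, zero_le_one, le_rfl, by nlinarith [sqrt_nonneg (Q * L)]⟩
  · have hQpos : 0 < Q := by nlinarith [sqrt_nonneg (Q * L)]
    refine ⟨t / (2 * Q), by positivity, (div_le_one (by positivity)).2 hc.le, ?_⟩
    have heq : Q * (t / (2 * Q)) ^ 2 - t / (2 * Q) * t = -(t ^ 2 / (4 * Q)) := by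
      field_simp; ring
    rw [heq, neg_le_neg_iff, le_div_iff₀ (by positivity)]
    linarith

lemma prob_not_abs_sampleCount_sub_le (hp : ∀ ω, 0 ≤ p ω) (hp1 : ∑ ω, p ω = 1)
    (A : Finset Ω) {L : ℝ} (hL : 0 < L) :
    prob (fun s : Fin N → Ω => ∏ j, p (s j))
        {s | ¬ |sampleCount A s - N * ∑ ω ∈ A, p ω| ≤
          2 * √(N * (∑ ω ∈ A, p ω) * L) + 2 * L} ≤ 2 * exp (-L) := by
  set q := ∑ ω ∈ A, p ω
  set t := 2 * √(N * q * L) + 2 * L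
  have hW : ∀ s : Fin N → Ω, 0 ≤ ∏ j, p (s j) := fun s => prod_nonneg fun j _ => hp (s j)
  have hNq : 0 ≤ N * q := mul_nonneg N.cast_nonneg (sum_nonneg fun ω _ => hp ω)
  obtain ⟨l, hl0, hl1, hl⟩ := exists_chernoff_parameter hNq hL
  have hsub : {s : Fin N → Ω | ¬ |sampleCount A s - N * q| ≤ t} ⊆
      {s | l * t ≤ l * (sampleCount A s - N * q)} ∪
        {s | l * t ≤ (-l) * (sampleCount A s - N * q)} := by
    intro s hs
    rcases lt_abs.1 (not_le.1 hs) with h | h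
    · exact Or.inl (mul_le_mul_of_nonneg_left h.le hl0)
    · exact Or.inr (show l * t ≤ (-l) * _ by linarith [mul_le_mul_of_nonneg_left h.le hl0])
  calc _ ≤ _ := prob_mono hW hsub
    _ ≤ _ := prob_union_le hW _ _
    _ ≤ exp (N * q * l ^ 2 - l * t) + exp (N * q * (-l) ^ 2 - l * t) :=
        add_le_add (prob_sampleCount_tail_le hp hp1 A (abs_le.2 ⟨by linarith, hl1⟩) _)
          (prob_sampleCount_tail_le hp hp1 A (abs_le.2 ⟨by linarith, by linarith⟩) _)
    _ ≤ 2 * exp (-L) := by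
        rw [neg_sq]
        linarith [exp_le_exp.2 hl]

lemma abs_div_sub_le_of_abs_sub_mul_le {n C q L : ℝ} (hn : 0 < n)
    (h : |C - n * q| ≤ 2 * √(n * q * L) + 2 * L) :
    |C / n - q| ≤ 2 * (√(q * L / n) + L / n) := by
  have hsqrt : √(n * q * L) = n * √(q * L / n) := by
    rw [show n * q * L = n ^ 2 * (q * L / n) by field_simp, sqrt_mul (sq_nonneg n), sqrt_sq hn.le]
  rw [show C / n - q = (C - n * q) / n by field_simp, abs_div, abs_of_pos hn, div_le_iff₀ hn]
  calc |C - n * q| ≤ 2 * √(n * q * L) + 2 * L := h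
    _ = 2 * (√(q * L / n) + L / n) * n := by rw [hsqrt]; field_simp

lemma prob_not_abs_sum_emp_sub_le (hp : ∀ ω, 0 ≤ p ω) (hp1 : ∑ ω, p ω = 1)
    (A : Finset Ω) (hN : 0 < N) {L : ℝ} (hL : 0 < L) :
    prob (fun s : Fin N → Ω => ∏ j, p (s j))
        {s | ¬ |∑ ω ∈ A, emp N s ω - ∑ ω ∈ A, p ω| ≤
          2 * (√((∑ ω ∈ A, p ω) * L / N) + L / N)} ≤ 2 * exp (-L) := by
  refine (prob_mono (fun s => prod_nonneg fun j _ => hp (s j))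
    (Set.ofPred_subset_ofPred.2 fun s hs h => hs ?_)).trans
      (prob_not_abs_sampleCount_sub_le hp hp1 A hL)
  rw [sum_emp_eq_sampleCount_div]
  exact abs_div_sub_le_of_abs_sub_mul_le (by exact_mod_cast hN) h

end Sampling

lemma abs_mul_sub_sq_mul_sq_le {u v k a' b' : ℝ} (hu : 0 ≤ u) (hu1 : u ≤ 1) (hv : 0 ≤ v)
    (hv1 : v ≤ 1) (hk : 0 ≤ k) (ha' : |a' - u ^ 2| ≤ 2 * (u * k + k ^ 2))
    (hb' : |b' - v ^ 2| ≤ 2 * (v * k + k ^ 2)) :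
    |a' * b' - u ^ 2 * v ^ 2| ≤ 4 * (u * v * k) + 6 * ((u ^ 2 + v ^ 2) * k ^ 2) + 8 * k ^ 4 := by
  have hb'abs : |b'| ≤ v ^ 2 + 2 * (v * k + k ^ 2) := by
    obtain ⟨h₁, h₂⟩ := abs_le.1 hb'
    exact abs_le.2 ⟨by nlinarith [sq_nonneg v], by linarith⟩
  calc |a' * b' - u ^ 2 * v ^ 2| = |(a' - u ^ 2) * b' + u ^ 2 * (b' - v ^ 2)| := by ring_nf
    _ ≤ |a' - u ^ 2| * |b'| + u ^ 2 * |b' - v ^ 2| :=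
        (abs_add_le _ _).trans_eq (by rw [abs_mul, abs_mul, abs_of_nonneg (sq_nonneg u)])
    _ ≤ 2 * (u * k + k ^ 2) * (v ^ 2 + 2 * (v * k + k ^ 2)) + u ^ 2 * (2 * (v * k + k ^ 2)) := by
        gcongr
    _ ≤ _ := by
        nlinarith [mul_nonneg (mul_nonneg (mul_nonneg hu hv) hk) (sub_nonneg.2 hu1),
          mul_nonneg (mul_nonneg (mul_nonneg hu hv) hk) (sub_nonneg.2 hv1),
          mul_nonneg (sq_nonneg k) (sq_nonneg (u - v)), sq_nonneg (u * k - k ^ 2),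
          sq_nonneg (v * k - k ^ 2)]

lemma empirical_bounds_of_abs_sub_le {a b p a' b' p' L n : ℝ} (ha : 0 ≤ a) (ha1 : a ≤ 1)
    (hb : 0 ≤ b) (hb1 : b ≤ 1) (hp : 0 ≤ p) (hL : 0 ≤ L) (hn : 0 ≤ n)
    (ha' : |a' - a| ≤ 2 * (√(a * L / n) + L / n))
    (hb' : |b' - b| ≤ 2 * (√(b * L / n) + L / n))
    (hp' : |p' - p| ≤ 2 * (√(p * L / n) + L / n)) :
    |a' - a| ≤ 14 * (√(a * L / n) + L / n) ∧
    |b' - b| ≤ 14 * (√(b * L / n) + L / n) ∧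
    |p' - p| ≤ 14 * (√(p * L / n) + L / n) ∧
    |a' * b' - a * b| ≤ 14 * (√(a * b * L / n) + (a + b) * L / n + L ^ 2 / n ^ 2) ∧
    |(p' - a' * b') - (p - a * b)| ≤
      14 * (√(|p - a * b| * L / n) + √(a * b * L / n) + L / n + L ^ 2 / n ^ 2) := by
  obtain ⟨u, hu, rfl⟩ : ∃ u, 0 ≤ u ∧ u ^ 2 = a := ⟨√a, sqrt_nonneg a, sq_sqrt ha⟩
  obtain ⟨v, hv, rfl⟩ : ∃ v, 0 ≤ v ∧ v ^ 2 = b := ⟨√b, sqrt_nonneg b, sq_sqrt hb⟩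
  obtain ⟨w, hw, rfl⟩ : ∃ w, 0 ≤ w ∧ w ^ 2 = p := ⟨√p, sqrt_nonneg p, sq_sqrt hp⟩
  obtain ⟨k, hk, hkLn⟩ : ∃ k, 0 ≤ k ∧ k ^ 2 = L / n :=
    ⟨√(L / n), sqrt_nonneg _, sq_sqrt (div_nonneg hL hn)⟩
  set d := √|w ^ 2 - u ^ 2 * v ^ 2|
  have hsqrt : ∀ x, 0 ≤ x → √(x ^ 2 * L / n) = x * k := fun x hx => by
    rw [mul_div_assoc, ← hkLn, ← mul_pow, sqrt_sq (mul_nonneg hx hk)]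
  have hsqrt_d : √(|w ^ 2 - u ^ 2 * v ^ 2| * L / n) = d * k := by
    rw [mul_div_assoc, ← hkLn, sqrt_mul (abs_nonneg _), sqrt_sq hk]
  have hk4 : L ^ 2 / n ^ 2 = k ^ 4 := by rw [← div_pow, ← hkLn]; ring
  have hu1 : u ≤ 1 := by nlinarith
  have hv1 : v ≤ 1 := by nlinarith
  have hwd : w ≤ d + u * v := by
    have := le_abs_self (w ^ 2 - u ^ 2 * v ^ 2)
    nlinarith [sq_sqrt (abs_nonneg (w ^ 2 - u ^ 2 * v ^ 2)), sqrt_nonneg |w ^ 2 - u ^ 2 * v ^ 2|,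
      mul_nonneg hu hv]
  rw [hsqrt u hu, ← hkLn] at ha'
  rw [hsqrt v hv, ← hkLn] at hb'
  rw [hsqrt w hw, ← hkLn] at hp'
  have hsqrt_uv : √(u ^ 2 * v ^ 2 * L / n) = u * v * k := by
    rw [← mul_pow]; exact hsqrt _ (mul_nonneg hu hv)
  rw [hsqrt u hu, hsqrt v hv, hsqrt w hw, hsqrt_uv, hsqrt_d, mul_div_assoc, hk4, ← hkLn]
  have hprod := abs_mul_sub_sq_mul_sq_le hu hu1 hv hv1 hk ha' hb'
  have hΔ : |(p' - a' * b') - (w ^ 2 - u ^ 2 * v ^ 2)| ≤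
      |p' - w ^ 2| + |a' * b' - u ^ 2 * v ^ 2| := by
    rw [show (p' - a' * b') - (w ^ 2 - u ^ 2 * v ^ 2) =
      (p' - w ^ 2) - (a' * b' - u ^ 2 * v ^ 2) by ring]
    exact abs_sub _ _
  have huvk : 0 ≤ u * v * k := by positivity
  have hk2 : (u ^ 2 + v ^ 2) * k ^ 2 ≤ 2 * k ^ 2 := by gcongr; linarith
  have hk4_nonneg : 0 ≤ k ^ 4 := by positivity
  refine ⟨by linarith [mul_nonneg hu hk, sq_nonneg k], by linarith [mul_nonneg hv hk, sq_nonneg k],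
    by linarith [mul_nonneg hw hk, sq_nonneg k],
    by linarith [mul_nonneg (add_nonneg ha hb) (sq_nonneg k)], ?_⟩
  linarith [mul_le_mul_of_nonneg_right hwd hk, mul_nonneg (sqrt_nonneg |w ^ 2 - u ^ 2 * v ^ 2|) hk,
    sq_nonneg k]

/-- Concentration of the empirical joint, marginals, product of marginals and `Δ̂`
around their population values (Claim 4.4). -/
theorem stmt8 :
    ∃ c : ℝ, 0 < c ∧
      ∀ (α : Type) [Fintype α], ∀ P : α × α → ℝ,
        (∀ z, 0 ≤ P z) → (∑ z, P z = 1) →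
        ∀ (x y : α) (N : ℕ), 1 < N →
        ∀ δ : ℝ, δ ∈ Set.Ioo (0 : ℝ) 1 →
        1 - 3 * δ ≤
          prob (fun s : Fin N → α × α => ∏ j, P (s j))
            {s |
              |(∑ y', emp N s (x, y')) - ∑ y', P (x, y')| ≤
                c * (Real.sqrt ((∑ y', P (x, y')) * Real.log (2 / δ) / N)
                  + Real.log (2 / δ) / N) ∧
              |(∑ x', emp N s (x', y)) - ∑ x', P (x', y)| ≤
                c * (Real.sqrt ((∑ x', P (x', y)) * Real.log (2 / δ) / N)
                  + Real.log (2 / δ) / N) ∧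
              |emp N s (x, y) - P (x, y)| ≤
                c * (Real.sqrt (P (x, y) * Real.log (2 / δ) / N)
                  + Real.log (2 / δ) / N) ∧
              |(∑ y', emp N s (x, y')) * (∑ x', emp N s (x', y)) -
                  (∑ y', P (x, y')) * (∑ x', P (x', y))| ≤
                c * (Real.sqrt ((∑ y', P (x, y')) * (∑ x', P (x', y)) *
                      Real.log (2 / δ) / N)
                  + ((∑ y', P (x, y')) + (∑ x', P (x', y))) * Real.log (2 / δ) / N
                  + (Real.log (2 / δ)) ^ 2 / (N : ℝ) ^ 2) ∧
              |(emp N s (x, y) - (∑ y', emp N s (x, y')) * (∑ x', emp N s (x', y))) -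
                  (P (x, y) - (∑ y', P (x, y')) * (∑ x', P (x', y)))| ≤
                c * (Real.sqrt (|P (x, y) - (∑ y', P (x, y')) * (∑ x', P (x', y))| *
                      Real.log (2 / δ) / N)
                  + Real.sqrt ((∑ y', P (x, y')) * (∑ x', P (x', y)) *
                      Real.log (2 / δ) / N)
                  + Real.log (2 / δ) / N
                  + (Real.log (2 / δ)) ^ 2 / (N : ℝ) ^ 2)} := by
  refine ⟨14, by norm_num, fun α _ P hP hP1 x y N hN δ hδ => ?_⟩
  set L := Real.log (2 / δ)
  have hL : 0 < L := Real.log_pos (by rw [lt_div_iff₀ hδ.1]; linarith [hδ.2])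
  have hW : ∀ s : Fin N → α × α, 0 ≤ ∏ j, P (s j) := fun s => prod_nonneg fun j _ => hP (s j)
  have htail : ∀ A : Finset (α × α), prob (fun s : Fin N → α × α => ∏ j, P (s j))
      {s | ¬ |∑ z ∈ A, emp N s z - ∑ z ∈ A, P z| ≤ 2 * (√((∑ z ∈ A, P z) * L / N) + L / N)} ≤ δ :=
    fun A => (prob_not_abs_sum_emp_sub_le hP hP1 A (by omega) hL).trans_eq <| by
      rw [exp_neg, exp_log (div_pos two_pos hδ.1)]
      field_simp
  have hmass : ∀ A : Finset (α × α), ∑ z ∈ A, P z ≤ 1 := fun A => hP1 ▸ sum_le_univ_sum_of_nonneg hP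
  have hX := htail ({x} ×ˢ univ)
  have hY := htail (univ ×ˢ {y})
  have hXY := htail {(x, y)}
  have hX1 := hmass ({x} ×ˢ univ)
  have hY1 := hmass (univ ×ˢ {y})
  simp only [sum_product, sum_singleton] at hX hY hXY hX1 hY1
  refine (one_sub_three_mul_le_prob_and hW (sum_prod_eq_one hP1) hX hY hXY).trans <|
    prob_mono hW fun s ⟨hsX, hsY, hsXY⟩ => ?_
  exact empirical_bounds_of_abs_sub_le (sum_nonneg fun _ _ => hP _) hX1
    (sum_nonneg fun _ _ => hP _) hY1 (hP _) hL.le N.cast_nonneg hsX hsY hsXY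

end
end

section
/- For ε ∈ (0,1), define the pmf R₁ on {0,1}³ with coordinates (X,Y,Z) by R₁(0,0,0) = R₁(1,1,1) = (1/2)(1−ε/2), R₁(0,1,1) = R₁(1,0,0) = ε/4, and R₁(x,y,z) = 0 otherwise (so (Y,Z) is uniform on {(0,0),(1,1)} and X copies this common bit with probability 1−ε, otherwise is an independent uniform bit), and let R₂(x,y,z) := R₁(y,x,z). Then: (i) the squared Hellinger distance satisfies H²(R₁,R₂) = ε/2; and (ii) there exist constants c > 0 and ε₀ ∈ (0,1) such that for all ε ∈ (0,ε₀], the pairwise mutual informations under R₁ satisfy I(Y;Z) − I(X;Z) ≥ c·ε·log(1/ε). -/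
/-
Both `(Y,Z)` and `(X,Z)` are the joint law of a uniform bit and its image under a binary symmetric
channel: a noiseless one for `(Y,Z)` and one keeping the bit with probability `1 - ε/2` for `(X,Z)`.
Such a pair has mutual information `log 2 - h(p)`, with `h` the binary entropy, so the gap is
`h(ε/2) ≥ (ε/2)·log(2/ε)`. The Hellinger distance is a direct computation: the heavy atoms
`(0,0,0)`, `(1,1,1)` are shared, and each of the four light atoms of mass `ε/4` carries mass in
exactly one of `R₁`, `R₂`.
-/

noncomputable section

/-- The hard realizable distribution `R₁` on `{0,1}³` with coordinates
`(X,Y,Z)`: `(Y,Z)` is uniform on `{(0,0),(1,1)}` and `X` copies the common bit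
with probability `1−ε`, otherwise being an independent uniform bit. So
`R₁(0,0,0)=R₁(1,1,1)=(1/2)(1−ε/2)`, `R₁(0,1,1)=R₁(1,0,0)=ε/4`, else `0`. -/
def S1 (ε : ℝ) : Bool × Bool × Bool → ℝ := fun t =>
  if t.1 = t.2.1 ∧ t.2.1 = t.2.2 then (1 / 2) * (1 - ε / 2)
  else if t.2.1 = t.2.2 then ε / 4 else 0

/-- `R₂(x,y,z) := R₁(y,x,z)`. -/
def S2 (ε : ℝ) : Bool × Bool × Bool → ℝ := fun t => S1 ε (t.2.1, t.1, t.2.2)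

/-- Squared Hellinger distance between two pmfs on a finite set. -/
def hellingerSq {Ω : Type*} [Fintype Ω] (P Q : Ω → ℝ) : ℝ :=
  (1 / 2) * ∑ x, (Real.sqrt (P x) - Real.sqrt (Q x)) ^ 2

/-- Mutual information of a pmf `Q` on `α × α`; terms with `Q z = 0` vanish. -/
def miP {α : Type*} [Fintype α] (Q : α × α → ℝ) : ℝ :=
  ∑ z : α × α, Q z * Real.log (Q z / ((∑ y, Q (z.1, y)) * (∑ x, Q (x, z.2))))

open Real

/-- The joint law of a uniform bit and its copy through a binary symmetric channel that keeps the
bit with probability `p`. -/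
def binarySymmetricJoint (p : ℝ) : Bool × Bool → ℝ := fun w =>
  if w.1 = w.2 then p / 2 else (1 - p) / 2

lemma mul_log_two_mul (x : ℝ) : x * log (2 * x) = x * log 2 - x * log x⁻¹ := by
  rcases eq_or_ne x 0 with rfl | hx
  · simp
  · rw [log_mul two_ne_zero hx, log_inv]; ring

theorem miP_binarySymmetricJoint (p : ℝ) :
    miP (binarySymmetricJoint p) = log 2 - binEntropy p := by
  have hmarg : p / 2 + (1 - p) / 2 = 1 / 2 := by ring
  have hratio : ∀ q : ℝ, q / 2 / (1 / 2 * (1 / 2)) = 2 * q := fun q => by ring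
  simp only [miP, binarySymmetricJoint, Fintype.sum_prod_type, Fintype.sum_bool]
  simp only [if_true, Bool.true_eq_false, Bool.false_eq_true, if_false, hmarg,
    add_comm ((1 - p) / 2), hratio, binEntropy]
  linear_combination mul_log_two_mul p + mul_log_two_mul (1 - p)

lemma mul_log_inv_le_binEntropy {p : ℝ} (h0 : 0 ≤ p) (h1 : p ≤ 1) :
    p * log p⁻¹ ≤ binEntropy p := by
  have : 0 ≤ (1 - p) * log (1 - p)⁻¹ := by
    rw [log_inv, mul_neg, ← neg_mul]
    exact negMulLog_nonneg (by linarith) (by linarith)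
  rw [binEntropy]
  linarith

theorem marginal_YZ_S1 (ε : ℝ) :
    (fun w : Bool × Bool => ∑ a, S1 ε (a, w.1, w.2)) = binarySymmetricJoint 1 := by
  funext w
  rcases w with ⟨_ | _, _ | _⟩ <;>
    simp [S1, binarySymmetricJoint] <;> ring

theorem marginal_XZ_S1 (ε : ℝ) :
    (fun w : Bool × Bool => ∑ b, S1 ε (w.1, b, w.2)) = binarySymmetricJoint (1 - ε / 2) := by
  funext w
  rcases w with ⟨_ | _, _ | _⟩ <;>
    simp [S1, binarySymmetricJoint] <;> ring

theorem hellingerSq_S1_S2 {ε : ℝ} (hε : 0 ≤ ε) : hellingerSq (S1 ε) (S2 ε) = ε / 2 := by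
  have hlight : sqrt (ε / 4) ^ 2 = ε / 4 := sq_sqrt (by positivity)
  simp only [hellingerSq, S1, S2, Fintype.sum_prod_type, Fintype.sum_bool]
  norm_num [hlight, -sqrt_div']
  ring

/-- Fact A.2: (i) `H²(R₁,R₂) = ε/2`, and (ii) `I(Y;Z) − I(X;Z) ≥ c·ε·log(1/ε)`
for all small enough `ε`. -/
theorem stmt19 :
    (∀ ε : ℝ, 0 < ε → ε < 1 → hellingerSq (S1 ε) (S2 ε) = ε / 2) ∧
      (∃ c : ℝ, 0 < c ∧ ∃ ε₀ : ℝ, 0 < ε₀ ∧ ε₀ < 1 ∧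
        ∀ ε : ℝ, 0 < ε → ε ≤ ε₀ →
          miP (fun w : Bool × Bool => ∑ a, S1 ε (a, w.1, w.2)) -
              miP (fun w : Bool × Bool => ∑ b, S1 ε (w.1, b, w.2)) ≥
            c * ε * Real.log (1 / ε)) := by
  refine ⟨fun ε hε _ => hellingerSq_S1_S2 hε.le,
    1 / 2, by norm_num, 1 / 2, by norm_num, by norm_num, fun ε hε hε₀ => ?_⟩
  have hgap : miP (fun w : Bool × Bool => ∑ a, S1 ε (a, w.1, w.2)) -
      miP (fun w : Bool × Bool => ∑ b, S1 ε (w.1, b, w.2)) = binEntropy (ε / 2) := by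
    rw [marginal_YZ_S1, marginal_XZ_S1, miP_binarySymmetricJoint, miP_binarySymmetricJoint,
      binEntropy_one, binEntropy_one_sub]
    ring
  rw [hgap, ge_iff_le]
  calc 1 / 2 * ε * log (1 / ε) = ε / 2 * log (1 / ε) := by ring
    _ ≤ ε / 2 * log (ε / 2)⁻¹ := by rw [inv_div]; gcongr; norm_num
    _ ≤ binEntropy (ε / 2) := mul_log_inv_le_binEntropy (by positivity) (by linarith)

end
end
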